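/- Fix p ∈ [1,∞). Let (X,d,μ) be a metric measure space of bounded geometry and let Y ⊆ X be a discretization of X with covering radius R. Fix T ≥ R. Define P_T f(x) = μ(B(x,T))^{-1} ∫_{B(x,T)} f dμ for locally μ-integrable f : X → ℝ; set S_T(x) = Σ_{z ∈ Y} 1_{B(z,T)}(x) and, for g : Y → ℝ, φ_T g(x) = Σ_{z ∈ Y} g(z)·1_{B(z,T)}(x)/S_T(x). Then there exists a constant C > 0 (depending only on p, T and the bounded-geometry data) such that for every locally μ-integrable f : X → ℝ one has ∫_X |f(x) − φ_T((P_T f)|_Y)(x)|^p dμ(x) ≤ C · ∫∫_{{(x,x') ∈ X×X : d(x,x') ≤ 2T}} |f(x) − f(x')|^p dμ(x) dμ(x'). -/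

import Mathlib

open MeasureTheory
open scoped ENNReal

/-- The averaging operator `P_T f (x) = μ(B(x,T))⁻¹ ∫_{B(x,T)} f dμ`. -/
noncomputable def PT {X : Type*} [MetricSpace X] [MeasurableSpace X]
    (μ : Measure X) (T : ℝ) (f : X → ℝ) (x : X) : ℝ :=
  (μ (Metric.closedBall x T)).toReal⁻¹ * ∫ y in Metric.closedBall x T, f y ∂μ

/-- `S_T(x) = Σ_{z ∈ Y} 1_{B(z,T)}(x)`, the number of points of `Y` at distance `≤ T`
from `x`. -/
noncomputable def STcount {X : Type*} [MetricSpace X] (Y : Set X) (T : ℝ) (x : X) : ℕ :=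
  Set.ncard {y ∈ Y | dist x y ≤ T}

/-- `φ_T g (x) = Σ_{z ∈ Y} g(z)·1_{B(z,T)}(x) / S_T(x)`, the extension operator from a
discretization `Y` back to `X`. -/
noncomputable def phiT {X : Type*} [MetricSpace X] (Y : Set X) (T : ℝ) (g : X → ℝ)
    (x : X) : ℝ :=
  (∑ᶠ y ∈ {y ∈ Y | dist x y ≤ T}, g y) / (STcount Y T x : ℝ)

/-!
Since `Y` is `1`-separated and balls of radius `1/3` have measure at least `v(1/3)`, only
finitely many (and, by the covering property, at least one) points of `Y` lie within `T` of a
given `x`. So `φ_T g (x)` is an average of finitely many values `g y` with `d(x, y) ≤ T`, and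
`|f x - φ_T (P_T f) x| ≤ |f x - P_T f y|` for one of them. Jensen's inequality on
`B(y, T) ⊆ B(x, 2T)` bounds `|f x - P_T f y|^p` by `v(T)⁻¹ ∫_{B(x, 2T)} |f x - f x'|^p dμ(x')`,
and Tonelli's theorem integrates this bound, giving `C = v(T)⁻¹`. Bounded geometry also makes
`X` separable, which is what makes a locally integrable `f` measurable.
-/

open Metric

theorem finite_setOf_dist_le_of_separated {X : Type*} [MetricSpace X] [MeasurableSpace X]
    [OpensMeasurableSpace X] {μ : Measure X} {Z : Set X} {ε : ℝ} (hε : 0 < ε)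
    (hsep : Z.Pairwise fun y y' ↦ ε ≤ dist y y') {c : ℝ≥0∞} (hc : c ≠ 0)
    (hlow : ∀ z ∈ Z, c ≤ μ (closedBall z (ε / 3))) (x : X) (T : ℝ)
    (hfin : μ (closedBall x (T + ε / 3)) ≠ ∞) :
    {y ∈ Z | dist x y ≤ T}.Finite := by
  set S := {y ∈ Z | dist x y ≤ T}
  have hdisj : Pairwise (Function.onFun Disjoint fun y : S ↦ closedBall (y : X) (ε / 3)) := by
    intro y y' hyy'
    refine closedBall_disjoint_closedBall ?_
    have : ε ≤ dist (y : X) y' := hsep y.2.1 y'.2.1 (Subtype.coe_ne_coe.2 hyy')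
    linarith
  have hunion : (⋃ y : S, closedBall (y : X) (ε / 3)) ⊆ closedBall x (T + ε / 3) := by
    refine Set.iUnion_subset fun y z hz ↦ ?_
    rw [mem_closedBall] at hz ⊢
    linarith [dist_triangle z y x, dist_comm x y, y.2.2]
  have := Measure.finite_const_le_meas_of_disjoint_iUnion μ (pos_iff_ne_zero.2 hc)
    (fun _ ↦ measurableSet_closedBall) hdisj (ne_top_of_le_ne_top hfin (measure_mono hunion))
  have huniv : {y : S | c ≤ μ (closedBall y (ε / 3))} = Set.univ :=
    Set.eq_univ_of_forall fun y ↦ hlow y y.2.1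
  rwa [huniv, Set.finite_univ_iff, Set.finite_coe_iff] at this

theorem secondCountableTopology_of_measure_closedBall {X : Type*} [MetricSpace X]
    [MeasurableSpace X] [OpensMeasurableSpace X] {μ : Measure X}
    (hlow : ∀ r > 0, ∃ c ≠ 0, ∀ x, c ≤ μ (closedBall x r))
    (hfin : ∀ x, ∀ r > 0, μ (closedBall x r) ≠ ∞) :
    SecondCountableTopology X := by
  rcases isEmpty_or_nonempty X with hX | ⟨⟨x₀⟩⟩
  · infer_instance
  refine secondCountable_of_almost_dense_set fun ε hε ↦ ?_
  obtain ⟨N, hN⟩ := zorn_subset {s : Set X | s.Pairwise fun y y' ↦ ε ≤ dist y y'}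
    fun C hC hchain ↦ ⟨⋃₀ C, (Set.pairwise_sUnion hchain.directedOn).2 hC,
      fun _ ↦ Set.subset_sUnion_of_mem⟩
  obtain ⟨c, hc, hc_le⟩ := hlow (ε / 3) (by positivity)
  refine ⟨N, ?_, fun x ↦ ?_⟩
  · have hcover : N ⊆ ⋃ n : ℕ, {y ∈ N | dist x₀ y ≤ n} := fun y hy ↦
      Set.mem_iUnion.2 ⟨⌈dist x₀ y⌉₊, hy, Nat.le_ceil _⟩
    refine .mono hcover (Set.countable_iUnion fun n ↦ Set.Finite.countable ?_)
    exact finite_setOf_dist_le_of_separated hε hN.1 hc (fun z _ ↦ hc_le z) x₀ n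
      (hfin x₀ _ (by positivity))
  · by_contra! hfar
    have hsep : (insert x N).Pairwise fun y y' ↦ ε ≤ dist y y' :=
      hN.1.insert fun y hy _ ↦ ⟨(hfar y hy).le, dist_comm x y ▸ (hfar y hy).le⟩
    have hx : x ∈ N := hN.2 hsep (Set.subset_insert x N) (Set.mem_insert x N)
    linarith [hfar x hx, dist_self x]

section Jensen

variable {α E : Type*} [MeasurableSpace α] [NormedAddCommGroup E] [NormedSpace ℝ E]
  [CompleteSpace E] {p : ℝ}

theorem rpow_lintegral_le_lintegral_rpow {ν : Measure α} [IsProbabilityMeasure ν]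
    {f : α → ℝ≥0∞} (hf : AEMeasurable f ν) (hp : 1 ≤ p) :
    (∫⁻ x, f x ∂ν) ^ p ≤ ∫⁻ x, f x ^ p ∂ν := by
  have h := eLpNorm'_le_eLpNorm'_of_exponent_le one_pos hp ν hf.aestronglyMeasurable
  have := lintegral_rpow_enorm_eq_rpow_eLpNorm' (f := f) (μ := ν) (by linarith : (0 : ℝ) < p)
  simp only [enorm_eq_self] at this
  rw [this]
  gcongr
  simpa [eLpNorm'_eq_lintegral_enorm] using h

theorem enorm_sub_integral_rpow_le {ν : Measure α} [IsProbabilityMeasure ν] {f : α → E}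
    (hf : AEStronglyMeasurable f ν) (c : E) (hp : 1 ≤ p) :
    ‖c - ∫ x, f x ∂ν‖ₑ ^ p ≤ ∫⁻ x, ‖c - f x‖ₑ ^ p ∂ν := by
  have hg : AEStronglyMeasurable (fun x ↦ c - f x) ν := aestronglyMeasurable_const.sub hf
  have hJ := rpow_lintegral_le_lintegral_rpow hg.enorm hp
  by_cases hfin : ∫⁻ x, ‖c - f x‖ₑ ∂ν = ∞
  · rw [hfin, ENNReal.top_rpow_of_pos (by linarith)] at hJ
    exact le_top.trans hJ
  have hg_int : Integrable (fun x ↦ c - f x) ν := ⟨hg, lt_top_iff_ne_top.2 hfin⟩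
  have hf_int : Integrable f ν :=
    ((integrable_const c).sub hg_int).congr (.of_forall fun x ↦ sub_sub_cancel c (f x))
  have hshift : c - ∫ x, f x ∂ν = ∫ x, c - f x ∂ν := by
    rw [integral_sub (integrable_const c) hf_int, integral_const, probReal_univ, one_smul]
  calc ‖c - ∫ x, f x ∂ν‖ₑ ^ p ≤ (∫⁻ x, ‖c - f x‖ₑ ∂ν) ^ p := by
        rw [hshift]; gcongr; exact enorm_integral_le_lintegral_enorm _
    _ ≤ ∫⁻ x, ‖c - f x‖ₑ ^ p ∂ν := hJ

theorem enorm_sub_average_rpow_le {ν : Measure α} [IsFiniteMeasure ν] [NeZero ν] {f : α → E}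
    (hf : AEStronglyMeasurable f ν) (c : E) (hp : 1 ≤ p) :
    ‖c - ⨍ x, f x ∂ν‖ₑ ^ p ≤ ⨍⁻ x, ‖c - f x‖ₑ ^ p ∂ν := by
  rw [average_eq', laverage_eq']
  exact enorm_sub_integral_rpow_le (hf.smul_measure _) c hp

end Jensen

theorem ofReal_abs_sub_PT_rpow_le {X : Type*} [MetricSpace X] [MeasurableSpace X]
    {μ : Measure X} {T : ℝ} {y : X} (h0 : μ (closedBall y T) ≠ 0)
    (hfin : μ (closedBall y T) ≠ ∞) {f : X → ℝ} (hf : AEStronglyMeasurable f μ) (c : ℝ)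
    {p : ℝ} (hp : 1 ≤ p) :
    ENNReal.ofReal (|c - PT μ T f y| ^ p) ≤
      ⨍⁻ x in closedBall y T, ENNReal.ofReal (|c - f x| ^ p) ∂μ := by
  have : IsFiniteMeasure (μ.restrict (closedBall y T)) := isFiniteMeasure_restrict.2 hfin
  have : NeZero (μ.restrict (closedBall y T)) := ⟨by simpa using h0⟩
  have hPT : PT μ T f y = ⨍ x in closedBall y T, f x ∂μ := by
    rw [setAverage_eq, PT, smul_eq_mul, measureReal_def]
  have hofReal : ∀ r : ℝ, ENNReal.ofReal (|r| ^ p) = ‖r‖ₑ ^ p := fun r ↦ by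
    rw [← ENNReal.ofReal_rpow_of_nonneg (abs_nonneg r) (by linarith), Real.enorm_eq_ofReal_abs]
  simp only [hofReal, hPT]
  exact enorm_sub_average_rpow_le hf.restrict c hp

theorem exists_abs_sub_phiT_le {X : Type*} [MetricSpace X] {Y : Set X} {T : ℝ} {x : X}
    (hfin : {y ∈ Y | dist x y ≤ T}.Finite) (hne : {y ∈ Y | dist x y ≤ T}.Nonempty)
    (g : X → ℝ) (c : ℝ) :
    ∃ y ∈ Y, dist x y ≤ T ∧ |c - phiT Y T g x| ≤ |c - g y| := by
  set s := hfin.toFinset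
  have hs : s.Nonempty := hfin.toFinset_nonempty.2 hne
  obtain ⟨y, hy, hmax⟩ := s.exists_max_image (fun y ↦ |c - g y|) hs
  obtain ⟨hyY, hyx⟩ := hfin.mem_toFinset.1 hy
  refine ⟨y, hyY, hyx, ?_⟩
  have hcard : (0 : ℝ) < s.card := by exact_mod_cast hs.card_pos
  have hphi : c - phiT Y T g x = (∑ z ∈ s, (c - g z)) / s.card := by
    rw [phiT, STcount, finsum_mem_eq_finite_toFinset_sum _ hfin,
      Set.ncard_eq_toFinset_card _ hfin, Finset.sum_sub_distrib, Finset.sum_const,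
      nsmul_eq_mul]
    field_simp
    ring
  rw [hphi, abs_div, abs_of_pos hcard, div_le_iff₀ hcard]
  calc |∑ z ∈ s, (c - g z)| ≤ ∑ z ∈ s, |c - g z| := Finset.abs_sum_le_sum_abs _ _
    _ ≤ ∑ _z ∈ s, |c - g y| := Finset.sum_le_sum hmax
    _ = |c - g y| * s.card := by rw [Finset.sum_const, nsmul_eq_mul, mul_comm]

theorem setLIntegral_dist_le_prod_eq {X : Type*} [MetricSpace X] [MeasurableSpace X]
    [OpensMeasurableSpace X] [SecondCountableTopology X] (μ ν : Measure X) [SFinite ν]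
    {F : X × X → ℝ≥0∞} (hF : AEMeasurable F (μ.prod ν)) (r : ℝ) :
    ∫⁻ q in {q : X × X | dist q.1 q.2 ≤ r}, F q ∂(μ.prod ν) =
      ∫⁻ x, ∫⁻ x' in closedBall x r, F (x, x') ∂ν ∂μ := by
  have hs : MeasurableSet {q : X × X | dist q.1 q.2 ≤ r} :=
    measurableSet_le (by fun_prop) measurable_const
  rw [← lintegral_indicator hs, lintegral_prod _ (hF.indicator hs)]
  refine lintegral_congr fun x ↦ ?_
  rw [← lintegral_indicator measurableSet_closedBall]
  refine lintegral_congr fun x' ↦ ?_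
  simp only [Set.indicator, Set.mem_ofPred_eq, mem_closedBall, dist_comm x']

theorem ofReal_abs_sub_phiT_PT_rpow_le {X : Type*} [MetricSpace X] [MeasurableSpace X]
    [OpensMeasurableSpace X] {μ : Measure X} {v : ℝ → ℝ} (hv : ∀ r > 0, 0 < v r)
    (hlow : ∀ x, ∀ r > 0, ENNReal.ofReal (v r) ≤ μ (closedBall x r))
    (hfin : ∀ x, ∀ r > 0, μ (closedBall x r) ≠ ∞) {Y : Set X}
    (hsep : Y.Pairwise fun y y' ↦ 1 ≤ dist y y') {T : ℝ} (hT : 0 < T)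
    (hcov : ∀ x, ∃ y ∈ Y, dist x y ≤ T) {f : X → ℝ} (hf : AEStronglyMeasurable f μ)
    {p : ℝ} (hp : 1 ≤ p) (x : X) :
    ENNReal.ofReal (|f x - phiT Y T (PT μ T f) x| ^ p) ≤
      (ENNReal.ofReal (v T))⁻¹ *
        ∫⁻ x' in closedBall x (2 * T), ENNReal.ofReal (|f x - f x'| ^ p) ∂μ := by
  have hnear_fin : {y ∈ Y | dist x y ≤ T}.Finite :=
    finite_setOf_dist_le_of_separated one_pos hsep
      (ENNReal.ofReal_pos.2 (hv _ (by norm_num))).ne' (fun z _ ↦ hlow z _ (by norm_num)) x T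
      (hfin x _ (by positivity))
  obtain ⟨y, -, hxy, hφ⟩ :=
    exists_abs_sub_phiT_le hnear_fin ((hcov x).imp fun _ ↦ id) (PT μ T f) (f x)
  have hμ_pos : ENNReal.ofReal (v T) ≠ 0 := (ENNReal.ofReal_pos.2 (hv T hT)).ne'
  have hball : closedBall y T ⊆ closedBall x (2 * T) := closedBall_subset_closedBall' (by
    rw [dist_comm]; linarith)
  calc ENNReal.ofReal (|f x - phiT Y T (PT μ T f) x| ^ p)
      ≤ ENNReal.ofReal (|f x - PT μ T f y| ^ p) := by gcongr
    _ ≤ ⨍⁻ x' in closedBall y T, ENNReal.ofReal (|f x - f x'| ^ p) ∂μ :=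
      ofReal_abs_sub_PT_rpow_le (hμ_pos.bot_lt.trans_le (hlow y T hT)).ne' (hfin y T hT) hf
        (f x) hp
    _ ≤ (ENNReal.ofReal (v T))⁻¹ *
          ∫⁻ x' in closedBall x (2 * T), ENNReal.ofReal (|f x - f x'| ^ p) ∂μ := by
      rw [setLAverage_eq, ENNReal.div_eq_inv_mul]
      gcongr
      exact hlow y T hT

theorem dist_phiT_PT_le_energy_general
    {X : Type*} [MetricSpace X] [MeasurableSpace X] [BorelSpace X]
    (μ : Measure X) (v V : ℝ → ℝ)
    (hv : ∀ r > 0, 0 < v r)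
    (hgeom : ∀ (x : X) (r : ℝ), 0 < r →
      ENNReal.ofReal (v r) ≤ μ (Metric.closedBall x r) ∧
        μ (Metric.closedBall x r) ≤ ENNReal.ofReal (V r))
    (Y : Set X) (R : ℝ) (hR : 0 < R)
    (hsep : ∀ y ∈ Y, ∀ y' ∈ Y, y ≠ y' → 1 ≤ dist y y')
    (hcov : ∀ x : X, ∃ y ∈ Y, dist x y ≤ R)
    (p : ℝ) (hp : 1 ≤ p) (T : ℝ) (hT : R ≤ T) :
    ∃ C : ℝ, 0 < C ∧ ∀ f : X → ℝ, LocallyIntegrable f μ →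
      (∫⁻ x, ENNReal.ofReal (|f x - phiT Y T (PT μ T f) x| ^ p) ∂μ)
        ≤ ENNReal.ofReal C *
          ∫⁻ q in {q : X × X | dist q.1 q.2 ≤ 2 * T},
            ENNReal.ofReal (|f q.1 - f q.2| ^ p) ∂(μ.prod μ) := by
  have hT0 : 0 < T := hR.trans_le hT
  have hlow : ∀ x, ∀ r > 0, ENNReal.ofReal (v r) ≤ μ (closedBall x r) :=
    fun x r hr ↦ (hgeom x r hr).1
  have hfin : ∀ x, ∀ r > 0, μ (closedBall x r) ≠ ∞ :=
    fun x r hr ↦ ne_top_of_le_ne_top ENNReal.ofReal_ne_top (hgeom x r hr).2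
  have : SecondCountableTopology X := secondCountableTopology_of_measure_closedBall
    (fun r hr ↦ ⟨_, (ENNReal.ofReal_pos.2 (hv r hr)).ne', fun x ↦ hlow x r hr⟩) hfin
  have : IsLocallyFiniteMeasure μ :=
    ⟨fun x ↦ ⟨closedBall x 1, closedBall_mem_nhds x one_pos, (hfin x 1 one_pos).lt_top⟩⟩
  refine ⟨(v T)⁻¹, inv_pos.2 (hv T hT0), fun f hf ↦ ?_⟩
  have hf_meas := hf.aestronglyMeasurable
  have hF : AEMeasurable (fun q : X × X ↦ ENNReal.ofReal (|f q.1 - f q.2| ^ p)) (μ.prod μ) := by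
    have := hf_meas.aemeasurable
    fun_prop
  rw [setLIntegral_dist_le_prod_eq μ μ hF, ← lintegral_const_mul' _ _ ENNReal.ofReal_ne_top,
    ENNReal.ofReal_inv_of_pos (hv T hT0)]
  exact lintegral_mono fun x ↦ ofReal_abs_sub_phiT_PT_rpow_le hv hlow hfin hsep hT0
    (fun z ↦ (hcov z).imp fun _ ⟨hy, hzy⟩ ↦ ⟨hy, hzy.trans hT⟩) hf_meas hp x

/-- `φ_T ∘ P_T` is close to the identity: for a metric measure space `(X,d,μ)` of bounded
geometry, a discretization `Y ⊆ X` with covering radius `R`, and `T ≥ R`, there is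
`C > 0` such that for every locally integrable `f`,
`∫_X |f − φ_T((P_T f)|_Y)|^p dμ ≤ C ∫∫_{d(x,x') ≤ 2T} |f(x) − f(x')|^p dμ dμ`. -/
theorem dist_phiT_PT_le_energy
    {X : Type*} [MetricSpace X] [MeasurableSpace X] [BorelSpace X]
    (μ : Measure X) (v V : ℝ → ℝ)
    (hv : ∀ r > 0, 0 < v r) (hvmono : MonotoneOn v (Set.Ioi 0))
    (hV : ∀ r > 0, 0 < V r) (hVmono : MonotoneOn V (Set.Ioi 0))
    (hgeom : ∀ (x : X) (r : ℝ), 0 < r →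
      ENNReal.ofReal (v r) ≤ μ (Metric.closedBall x r) ∧
        μ (Metric.closedBall x r) ≤ ENNReal.ofReal (V r))
    (Y : Set X) (R : ℝ) (hR : 0 < R)
    (hsep : ∀ y ∈ Y, ∀ y' ∈ Y, y ≠ y' → 1 ≤ dist y y')
    (hcov : ∀ x : X, ∃ y ∈ Y, dist x y ≤ R)
    (p : ℝ) (hp : 1 ≤ p) (T : ℝ) (hT : R ≤ T) :
    ∃ C : ℝ, 0 < C ∧ ∀ f : X → ℝ, LocallyIntegrable f μ →
      (∫⁻ x, ENNReal.ofReal (|f x - phiT Y T (PT μ T f) x| ^ p) ∂μ)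
        ≤ ENNReal.ofReal C *
          ∫⁻ q in {q : X × X | dist q.1 q.2 ≤ 2 * T},
            ENNReal.ofReal (|f q.1 - f q.2| ^ p) ∂(μ.prod μ) :=
  dist_phiT_PT_le_energy_general μ v V hv hgeom Y R hR hsep hcov p hp T hT
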